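/- Suppose for each t, f_t : X → ℝ is nonnegative and satisfies the smoothness consequence f_t(x) ≤ (1+λ) f_t(y) + (1+1/λ)(β_h/2)‖x−y‖² for all λ > 0. With the multi-step switching cost of the previous statement, for any two action sequences x_{1:T}, x′_{1:T} with common initial history and any λ > 0: cost(x_{1:T}) − (1+λ)·cost(x′_{1:T}) ≤ ((β_h + (1+Σ_{k=1}^p L_k)²)/2)·(1+1/λ)·Σ_{t=1}^T ‖x_t − x′_t‖², where cost(x_{1:T}) = Σ_t f_t(x_t) + ½‖x_t − δ(x_{t−p:t−1})‖². -/

import Mathlib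

/-!
Compare the two sequences one step at a time. The hitting costs are handled by the smoothness
inequality. For the switching costs, the triangle inequality and the coordinatewise Lipschitz
bound on `δ` give
`‖x_t - δ(x_{t-p:t-1})‖ ≤ ‖x'_t - δ(x'_{t-p:t-1})‖ + ‖x_t - x'_t‖ + ∑ₖ Lₖ ‖x_{t-k} - x'_{t-k}‖`;
squaring with `(b + c)² ≤ (1 + λ) b² + (1 + 1/λ) c²` and then applying Cauchy–Schwarz with weights
`(1, L₁, …, L_p)` to `c²` bounds the excess by `(1 + 1/λ)(1 + ∑ L)` times
`‖x_t - x'_t‖² + ∑ₖ Lₖ ‖x_{t-k} - x'_{t-k}‖²`. Since the two sequences share their history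
before time 1, summing over `t` makes each lagged sum at most `∑ₜ ‖x_t - x'_t‖²`, and the total
factor is `(1 + ∑ L)²`.
-/

open Finset

lemma add_sq_le_one_add_mul_sq_add_one_add_inv_mul_sq {lam : ℝ} (hlam : 0 < lam) (b c : ℝ) :
    (b + c) ^ 2 ≤ (1 + lam) * b ^ 2 + (1 + 1 / lam) * c ^ 2 := by
  have hpp : 2 * b * c ≤ lam * b ^ 2 + 1 / lam * c ^ 2 := by
    rw [← mul_le_mul_iff_of_pos_left hlam]
    field_simp
    nlinarith [sq_nonneg (lam * b - c)]
  nlinarith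

lemma sq_add_sum_mul_le {ι : Type*} [Fintype ι] (w : ι → ℝ) (hw : ∀ i, 0 ≤ w i) (a : ℝ)
    (b : ι → ℝ) :
    (a + ∑ i, w i * b i) ^ 2 ≤ (1 + ∑ i, w i) * (a ^ 2 + ∑ i, w i * b i ^ 2) := by
  -- Cauchy–Schwarz on `Option ι`, the extra index `none` carrying weight `1` and value `a`.
  have hw' : ∀ o : Option ι, 0 ≤ o.elim 1 w := fun o => by cases o <;> simp [hw]
  simpa [Fintype.sum_option] using
    sum_sq_le_sum_mul_sum_of_sq_le_mul univ (r := fun o => o.elim 1 w * o.elim a b)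
      (fun o _ => hw' o) (fun o _ => mul_nonneg (hw' o) (sq_nonneg (o.elim a b)))
      (fun o _ => le_of_eq (by ring))

section CoordLipschitz

variable {ι E F : Type*} [Fintype ι] [DecidableEq ι] [SeminormedAddCommGroup E]
  [SeminormedAddCommGroup F] {δ : (ι → E) → F} {L : ι → ℝ}

lemma norm_sub_le_sum_of_coord_lipschitz
    (hδ : ∀ (i : ι) (u v : ι → E), (∀ j, j ≠ i → u j = v j) →
      ‖δ u - δ v‖ ≤ L i * ‖u i - v i‖) (u v : ι → E) :
    ‖δ u - δ v‖ ≤ ∑ i, L i * ‖u i - v i‖ := by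
  suffices h : ∀ s : Finset ι, ‖δ (s.piecewise u v) - δ v‖ ≤ ∑ i ∈ s, L i * ‖u i - v i‖ by
    simpa using h univ
  intro s
  induction s using Finset.induction_on with
  | empty => simp
  | insert i s hi ih =>
    have hstep := hδ i (Function.update (s.piecewise u v) i (u i)) (s.piecewise u v)
      (fun j hj => Function.update_of_ne hj _ _)
    rw [Function.update_self, piecewise_eq_of_notMem _ _ _ hi] at hstep
    rw [piecewise_insert, sum_insert hi]
    calc _ ≤ ‖δ (Function.update (s.piecewise u v) i (u i)) - δ (s.piecewise u v)‖ +
          ‖δ (s.piecewise u v) - δ v‖ := norm_sub_le_norm_sub_add_norm_sub _ _ _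
      _ ≤ _ := add_le_add hstep ih

lemma norm_sub_sq_le_of_coord_lipschitz (hL : ∀ i, 0 ≤ L i)
    (hδ : ∀ (i : ι) (u v : ι → E), (∀ j, j ≠ i → u j = v j) →
      ‖δ u - δ v‖ ≤ L i * ‖u i - v i‖) {lam : ℝ} (hlam : 0 < lam) (z z' : F) (u u' : ι → E) :
    ‖z - δ u‖ ^ 2 ≤ (1 + lam) * ‖z' - δ u'‖ ^ 2 +
      (1 + 1 / lam) * (1 + ∑ i, L i) * (‖z - z'‖ ^ 2 + ∑ i, L i * ‖u i - u' i‖ ^ 2) := by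
  set c := ‖z - z'‖ + ∑ i, L i * ‖u i - u' i‖
  have htri : ‖z - δ u‖ ≤ ‖z' - δ u'‖ + c := by
    have hδuu' := norm_sub_le_sum_of_coord_lipschitz hδ u u'
    calc ‖z - δ u‖ = ‖(z' - δ u') + (z - z') + (δ u' - δ u)‖ := by congr 1; abel
      _ ≤ ‖z' - δ u'‖ + ‖z - z'‖ + ‖δ u - δ u'‖ := norm_sub_rev (δ u) _ ▸ norm_add₃_le
      _ ≤ ‖z' - δ u'‖ + c := by linarith
  have hc := sq_add_sum_mul_le L hL ‖z - z'‖ (fun i => ‖u i - u' i‖)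
  calc ‖z - δ u‖ ^ 2 ≤ (‖z' - δ u'‖ + c) ^ 2 := by gcongr
    _ ≤ (1 + lam) * ‖z' - δ u'‖ ^ 2 + (1 + 1 / lam) * c ^ 2 :=
      add_sq_le_one_add_mul_sq_add_one_add_inv_mul_sq hlam _ _
    _ ≤ _ := by
      rw [mul_assoc]; gcongr

end CoordLipschitz

lemma sum_Icc_comp_sub_le {D : ℤ → ℝ} (hD : ∀ s, 0 ≤ D s) (hD0 : ∀ s ≤ 0, D s = 0)
    {k : ℤ} (hk : 0 ≤ k) (T : ℤ) :
    ∑ t ∈ Icc 1 T, D (t - k) ≤ ∑ t ∈ Icc 1 T, D t := by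
  calc ∑ t ∈ Icc 1 T, D (t - k) = ∑ s ∈ Icc (1 - k) (T - k), D s := by
        simp_rw [sub_eq_add_neg, ← map_add_right_Icc, sum_map, addRightEmbedding_apply]
    _ = ∑ s ∈ Icc 1 (T - k), D s := by
        refine (sum_subset (Icc_subset_Icc_left (by omega)) fun s hs hs1 => hD0 s ?_).symm
        simp only [mem_Icc] at hs hs1
        omega
    _ ≤ ∑ t ∈ Icc 1 T, D t :=
        sum_le_sum_of_subset_of_nonneg (Icc_subset_Icc_right (by omega)) fun s _ _ => hD s

lemma sum_Icc_sum_mul_comp_sub_le {ι : Type*} [Fintype ι] {L : ι → ℝ} (hL : ∀ i, 0 ≤ L i)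
    {lag : ι → ℤ} (hlag : ∀ i, 0 ≤ lag i) {D : ℤ → ℝ} (hD : ∀ s, 0 ≤ D s)
    (hD0 : ∀ s ≤ 0, D s = 0) (T : ℤ) :
    ∑ t ∈ Icc 1 T, ∑ i, L i * D (t - lag i) ≤ (∑ i, L i) * ∑ t ∈ Icc 1 T, D t := by
  rw [sum_comm, sum_mul]
  refine sum_le_sum fun i _ => ?_
  rw [← mul_sum]
  exact mul_le_mul_of_nonneg_left (sum_Icc_comp_sub_le hD hD0 (hlag i) T) (hL i)

theorem total_cost_smoothness_general
    {X : Type*} [NormedAddCommGroup X]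
    {p : ℕ} (T : ℕ)
    (δ : (Fin p → X) → X) (L : Fin p → ℝ) (hL : ∀ i, 0 ≤ L i)
    (hδ : ∀ (i : Fin p) (u v : Fin p → X), (∀ j, j ≠ i → u j = v j) →
      ‖δ u - δ v‖ ≤ L i * ‖u i - v i‖)
    (f : ℤ → X → ℝ) (βh : ℝ)
    (hfsmooth : ∀ (t : ℤ) (lam : ℝ), 0 < lam → ∀ z w : X,
      f t z ≤ (1 + lam) * f t w + (1 + 1 / lam) * (βh / 2) * ‖z - w‖ ^ 2)
    (lam : ℝ) (hlam : 0 < lam)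
    (x x' : ℤ → X) (hinit : ∀ t : ℤ, t ≤ 0 → x t = x' t)
    (cost cost' : ℝ)
    (hcost : cost = ∑ t ∈ Finset.Icc (1 : ℤ) T,
      (f t (x t) + (1 / 2) * ‖x t - δ (fun i => x (t - (i + 1)))‖ ^ 2))
    (hcost' : cost' = ∑ t ∈ Finset.Icc (1 : ℤ) T,
      (f t (x' t) + (1 / 2) * ‖x' t - δ (fun i => x' (t - (i + 1)))‖ ^ 2)) :
    cost - (1 + lam) * cost' ≤
      ((βh + (1 + ∑ k, L k) ^ 2) / 2) * (1 + 1 / lam) *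
        ∑ t ∈ Finset.Icc (1 : ℤ) T, ‖x t - x' t‖ ^ 2 := by
  set M := 1 + ∑ k, L k
  set d : ℤ → ℝ := fun t => ‖x t - x' t‖ ^ 2
  have hstep : ∀ t, (f t (x t) + 1 / 2 * ‖x t - δ (fun i => x (t - (i + 1)))‖ ^ 2) -
      (1 + lam) * (f t (x' t) + 1 / 2 * ‖x' t - δ (fun i => x' (t - (i + 1)))‖ ^ 2) ≤
      (1 + 1 / lam) * (βh / 2) * d t +
        (1 + 1 / lam) * (M / 2) * (d t + ∑ i : Fin p, L i * d (t - (i + 1))) := fun t => by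
    have hf := hfsmooth t lam hlam (x t) (x' t)
    have hs := norm_sub_sq_le_of_coord_lipschitz hL hδ hlam (x t) (x' t)
      (fun i => x (t - (i + 1))) (fun i => x' (t - (i + 1)))
    linarith
  have hlag := sum_Icc_sum_mul_comp_sub_le hL (lag := fun i : Fin p => (i : ℤ) + 1)
    (fun i => by positivity) (fun s => sq_nonneg ‖x s - x' s‖)
    (fun s hs => by simp [hinit s hs]) T
  have hM : 0 ≤ M := add_nonneg zero_le_one (sum_nonneg fun i _ => hL i)
  have hw : 0 ≤ (1 + 1 / lam) * (M / 2) := by positivity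
  calc cost - (1 + lam) * cost' ≤ ∑ t ∈ Icc (1 : ℤ) T, ((1 + 1 / lam) * (βh / 2) * d t +
        (1 + 1 / lam) * (M / 2) * (d t + ∑ i : Fin p, L i * d (t - (i + 1)))) := by
        rw [hcost, hcost', mul_sum, ← sum_sub_distrib]
        exact sum_le_sum fun t _ => hstep t
    _ ≤ _ := by
        simp only [sum_add_distrib, ← mul_sum]
        linarith [mul_le_mul_of_nonneg_left hlag hw]

/-- total-cost comparison.  Each hitting cost `f t` is nonnegative
and satisfies the β_h-smoothness consequence; with the multi-step switching
cost `½‖x_t − δ(x_{t−p:t−1})‖²` (coordinate `i` of the argument of `δ` has lag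
`i+1` and Lipschitz constant `L i`), for any two action sequences with common
initial history and any λ > 0:
`cost(x) − (1+λ)·cost(x') ≤ ((β_h+(1+ΣL)²)/2)(1+1/λ)·Σ‖x_t−x'_t‖²`. -/
theorem total_cost_smoothness
    {X : Type*} [NormedAddCommGroup X] [InnerProductSpace ℝ X]
    {p : ℕ} (hp : 1 ≤ p) (T : ℕ)
    (δ : (Fin p → X) → X) (L : Fin p → ℝ) (hL : ∀ i, 0 ≤ L i)
    (hδ : ∀ (i : Fin p) (u v : Fin p → X), (∀ j, j ≠ i → u j = v j) →
      ‖δ u - δ v‖ ≤ L i * ‖u i - v i‖)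
    (f : ℤ → X → ℝ) (βh : ℝ) (hβh : 0 < βh)
    (hf0 : ∀ t z, 0 ≤ f t z)
    (hfsmooth : ∀ (t : ℤ) (lam : ℝ), 0 < lam → ∀ z w : X,
      f t z ≤ (1 + lam) * f t w + (1 + 1 / lam) * (βh / 2) * ‖z - w‖ ^ 2)
    (lam : ℝ) (hlam : 0 < lam)
    (x x' : ℤ → X) (hinit : ∀ t : ℤ, t ≤ 0 → x t = x' t)
    (cost cost' : ℝ)
    (hcost : cost = ∑ t ∈ Finset.Icc (1 : ℤ) T,
      (f t (x t) + (1 / 2) * ‖x t - δ (fun i => x (t - (i + 1)))‖ ^ 2))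
    (hcost' : cost' = ∑ t ∈ Finset.Icc (1 : ℤ) T,
      (f t (x' t) + (1 / 2) * ‖x' t - δ (fun i => x' (t - (i + 1)))‖ ^ 2)) :
    cost - (1 + lam) * cost' ≤
      ((βh + (1 + ∑ k, L k) ^ 2) / 2) * (1 + 1 / lam) *
        ∑ t ∈ Finset.Icc (1 : ℤ) T, ‖x t - x' t‖ ^ 2 :=
  total_cost_smoothness_general T δ L hL hδ f βh hfsmooth lam hlam x x' hinit cost cost' hcost
    hcost'
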